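/- If μ is a nonzero nilpotent Lie bracket on ℝⁿ, then the Ricci form ric_μ(x,y) = ⟨Ric_μ x, y⟩ has both a positive direction and a negative direction: there exist x, y ∈ ℝⁿ with ric_μ(x,x) < 0 and ric_μ(y,y) > 0. -/

import Mathlib

open Matrix BigOperators

noncomputable section

/-- An element of `V_n`: a skew-symmetric bilinear map `μ : ℝⁿ × ℝⁿ → ℝⁿ`. -/
def IsSkewBil {n : ℕ} (μ : (Fin n → ℝ) → (Fin n → ℝ) → (Fin n → ℝ)) : Prop :=
  (∀ x, IsLinearMap ℝ (μ x)) ∧ (∀ y, IsLinearMap ℝ (fun x => μ x y)) ∧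
  (∀ x y, μ x y = - μ y x)

/-- The matrix of `ad_μ x : y ↦ μ(x,y)` in the canonical basis. -/
def adMat {n : ℕ} (μ : (Fin n → ℝ) → (Fin n → ℝ) → (Fin n → ℝ)) (x : Fin n → ℝ) :
    Matrix (Fin n) (Fin n) ℝ := fun i j => μ x (Pi.single j 1) i

/-- The Ricci operator `Ric_μ = -½ Σᵢ (ad_μ eᵢ)ᵀ(ad_μ eᵢ) + ¼ Σᵢ (ad_μ eᵢ)(ad_μ eᵢ)ᵀ`. -/
def Ric {n : ℕ} (μ : (Fin n → ℝ) → (Fin n → ℝ) → (Fin n → ℝ)) :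
    Matrix (Fin n) (Fin n) ℝ :=
  (-(1/2 : ℝ)) • ∑ i, (adMat μ (Pi.single i 1))ᵀ * adMat μ (Pi.single i 1)
  + (1/4 : ℝ) • ∑ i, adMat μ (Pi.single i 1) * (adMat μ (Pi.single i 1))ᵀ

/-- `δ_μ(α)(x,y) = μ(αx,y) + μ(x,αy) - αμ(x,y)`. -/
def deltaMap {n : ℕ} (μ : (Fin n → ℝ) → (Fin n → ℝ) → (Fin n → ℝ))
    (A : Matrix (Fin n) (Fin n) ℝ) : (Fin n → ℝ) → (Fin n → ℝ) → (Fin n → ℝ) :=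
  fun x y => μ (A.mulVec x) y + μ x (A.mulVec y) - A.mulVec (μ x y)

/-- The inner product `⟨μ,ν⟩ = Σ_{i,j} ⟨μ(eᵢ,eⱼ), ν(eᵢ,eⱼ)⟩` on `V_n`. -/
def innV {n : ℕ} (μ ν : (Fin n → ℝ) → (Fin n → ℝ) → (Fin n → ℝ)) : ℝ :=
  ∑ i, ∑ j, ∑ k,
    μ (Pi.single i 1) (Pi.single j 1) k * ν (Pi.single i 1) (Pi.single j 1) k

/-- `D` is a derivation of the algebra `(ℝⁿ, μ)`. -/
def IsDeriv {n : ℕ} (μ : (Fin n → ℝ) → (Fin n → ℝ) → (Fin n → ℝ))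
    (D : Matrix (Fin n) (Fin n) ℝ) : Prop :=
  ∀ x y, D.mulVec (μ x y) = μ (D.mulVec x) y + μ x (D.mulVec y)

/-- The Jacobi identity. -/
def IsJacobi {n : ℕ} (μ : (Fin n → ℝ) → (Fin n → ℝ) → (Fin n → ℝ)) : Prop :=
  ∀ x y z, μ x (μ y z) + μ y (μ z x) + μ z (μ x y) = 0

/-- `μ` is a nilpotent Lie bracket on `ℝⁿ`. -/
def IsNilBracket {n : ℕ} (μ : (Fin n → ℝ) → (Fin n → ℝ) → (Fin n → ℝ)) : Prop :=
  IsSkewBil μ ∧ IsJacobi μ ∧ ∀ x, IsNilpotent (adMat μ x)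

/-! The trace of `Ric_μ` is `-¼ Σᵢ tr((ad eᵢ)ᵀ ad eᵢ) = -¼ Σᵢⱼ |μ(eᵢ, eⱼ)|² < 0`, so some basis
vector is a negative direction. Since `(ℝⁿ, μ)` is nilpotent and not abelian, its centre meets its
derived algebra nontrivially; for `z ≠ 0` in the intersection,
`ric_μ(z, z) = -½ Σᵢ |μ(eᵢ, z)|² + ¼ Σᵢ |(ad eᵢ)ᵀ z|²` has vanishing first term, and the second is
positive because `z`, lying in the span of the brackets, is not orthogonal to all `μ(eᵢ, eⱼ)`. -/

lemma transpose_mul_self_mulVec_dotProduct {R m k : Type*} [CommSemiring R] [Fintype m]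
    [Fintype k] (A : Matrix m k R) (x : k → R) :
    (Aᵀ * A) *ᵥ x ⬝ᵥ x = A *ᵥ x ⬝ᵥ A *ᵥ x := by
  rw [← mulVec_mulVec, dotProduct_comm, dotProduct_mulVec, vecMul_transpose]

lemma trace_transpose_mul_self_nonneg {m k : Type*} [Fintype m] [Fintype k] (A : Matrix m k ℝ) :
    0 ≤ (Aᵀ * A).trace := by
  rw [← conjTranspose_eq_transpose_of_trivial]
  exact (posSemidef_conjTranspose_mul_self A).trace_nonneg

lemma trace_transpose_mul_self_pos {m k : Type*} [Fintype m] [Fintype k] {A : Matrix m k ℝ}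
    (hA : A ≠ 0) : 0 < (Aᵀ * A).trace := by
  rw [← conjTranspose_eq_transpose_of_trivial]
  exact (posSemidef_conjTranspose_mul_self A).trace_nonneg.lt_of_ne'
    (trace_conjTranspose_mul_self_eq_zero_iff.not.2 hA)

lemma sum_dotProduct_self_pos {ι m : Type*} [Fintype ι] [Fintype m] {v : ι → m → ℝ} {i : ι}
    (hi : v i ≠ 0) : 0 < ∑ j, v j ⬝ᵥ v j :=
  Finset.sum_pos' (fun _ _ => Fintype.sum_nonneg fun _ => mul_self_nonneg _)
    ⟨i, Finset.mem_univ _, (Fintype.sum_nonneg fun _ => mul_self_nonneg _).lt_of_ne'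
      (dotProduct_self_eq_zero.not.2 hi)⟩

def IsBilinear {n : ℕ} (μ : (Fin n → ℝ) → (Fin n → ℝ) → (Fin n → ℝ)) : Prop :=
  (∀ x, IsLinearMap ℝ (μ x)) ∧ ∀ y, IsLinearMap ℝ fun x => μ x y

namespace IsBilinear

variable {n : ℕ} {μ : (Fin n → ℝ) → (Fin n → ℝ) → (Fin n → ℝ)}

def toLinearMap₂ (h : IsBilinear μ) : (Fin n → ℝ) →ₗ[ℝ] (Fin n → ℝ) →ₗ[ℝ] (Fin n → ℝ) :=
  LinearMap.mk₂ ℝ μ (fun x x' y => (h.2 y).map_add x x') (fun c x y => (h.2 y).map_smul c x)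
    (fun x y y' => (h.1 x).map_add y y') (fun c x y => (h.1 x).map_smul c y)

lemma dotProduct_eq_zero_of_single (h : IsBilinear μ) {z : Fin n → ℝ}
    (hz : ∀ i j, z ⬝ᵥ μ (Pi.single i 1) (Pi.single j 1) = 0) (x y : Fin n → ℝ) :
    z ⬝ᵥ μ x y = 0 := by
  have : h.toLinearMap₂.compr₂ (dotProductEquiv ℝ (Fin n) z) = 0 :=
    LinearMap.ext_basis (Pi.basisFun ℝ (Fin n)) (Pi.basisFun ℝ (Fin n)) fun i j => by
      simpa [toLinearMap₂] using hz i j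
  exact LinearMap.congr_fun₂ this x y

lemma exists_apply_single_ne_zero (h : IsBilinear μ) (hne : μ ≠ fun _ _ => 0) :
    ∃ i j, μ (Pi.single i 1) (Pi.single j 1) ≠ 0 := by
  by_contra! h0
  exact hne (funext₂ fun x y => dotProduct_self_eq_zero.1
    (h.dotProduct_eq_zero_of_single (fun i j => by rw [h0, dotProduct_zero]) x y))

end IsBilinear

lemma adMat_mulVec {n : ℕ} {μ : (Fin n → ℝ) → (Fin n → ℝ) → (Fin n → ℝ)} {x : Fin n → ℝ}
    (h : IsLinearMap ℝ (μ x)) (y : Fin n → ℝ) : adMat μ x *ᵥ y = μ x y := by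
  have : adMat μ x = LinearMap.toMatrix' (IsLinearMap.mk' _ h) := rfl
  rw [this, LinearMap.toMatrix'_mulVec]
  rfl

section Ricci

variable {n : ℕ}

lemma Ric_mulVec_dotProduct (μ : (Fin n → ℝ) → (Fin n → ℝ) → (Fin n → ℝ)) (x : Fin n → ℝ) :
    Ric μ *ᵥ x ⬝ᵥ x =
      -(1/2) * ∑ i, adMat μ (Pi.single i 1) *ᵥ x ⬝ᵥ adMat μ (Pi.single i 1) *ᵥ x
      + 1/4 * ∑ i, (adMat μ (Pi.single i 1))ᵀ *ᵥ x ⬝ᵥ (adMat μ (Pi.single i 1))ᵀ *ᵥ x := by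
  simp only [Ric, add_mulVec, smul_mulVec, add_dotProduct, smul_dotProduct, sum_mulVec,
    sum_dotProduct, transpose_mul_self_mulVec_dotProduct, smul_eq_mul]
  simp_rw [← transpose_mul_self_mulVec_dotProduct, transpose_transpose]

lemma trace_Ric (μ : (Fin n → ℝ) → (Fin n → ℝ) → (Fin n → ℝ)) :
    (Ric μ).trace =
      -(1/4) * ∑ i, ((adMat μ (Pi.single i 1))ᵀ * adMat μ (Pi.single i 1)).trace := by
  simp only [Ric, trace_add, trace_smul, trace_sum, smul_eq_mul, trace_mul_comm _ (_ᵀ)]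
  ring

lemma exists_Ric_mulVec_dotProduct_neg {μ : (Fin n → ℝ) → (Fin n → ℝ) → (Fin n → ℝ)}
    {i j : Fin n} (hij : μ (Pi.single i 1) (Pi.single j 1) ≠ 0) :
    ∃ x, Ric μ *ᵥ x ⬝ᵥ x < 0 := by
  have hi : adMat μ (Pi.single i 1) ≠ 0 := fun h => hij (funext fun k => congrFun₂ h k j)
  have htrace : (Ric μ).trace < 0 := by
    have := Finset.sum_pos' (fun l _ => trace_transpose_mul_self_nonneg (adMat μ (Pi.single l 1)))
      ⟨i, Finset.mem_univ _, trace_transpose_mul_self_pos hi⟩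
    rw [trace_Ric]
    linarith
  obtain ⟨k, -, hk⟩ := Finset.exists_lt_of_sum_lt (g := fun _ => (0 : ℝ))
    (by simpa [trace] using htrace)
  exact ⟨Pi.single k 1, by rwa [mulVec_single_one, dotProduct_single_one]⟩

lemma Ric_mulVec_dotProduct_pos {μ : (Fin n → ℝ) → (Fin n → ℝ) → (Fin n → ℝ)}
    (h : IsBilinear μ) {z : Fin n → ℝ} (hz0 : z ≠ 0) (hzc : ∀ x, μ x z = 0)
    (hz : z ∈ Submodule.span ℝ {w | ∃ x y, μ x y = w}) : 0 < Ric μ *ᵥ z ⬝ᵥ z := by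
  obtain ⟨i, hi⟩ : ∃ i, (adMat μ (Pi.single i 1))ᵀ *ᵥ z ≠ 0 := by
    by_contra! h0
    have hbr : ∀ x y, z ⬝ᵥ μ x y = 0 := h.dotProduct_eq_zero_of_single fun i j => by
      rw [← adMat_mulVec (h.1 _), dotProduct_mulVec, ← mulVec_transpose, h0 i, zero_dotProduct]
    have : z ∈ LinearMap.ker (dotProductEquiv ℝ (Fin n) z) :=
      Submodule.span_le.2 (by rintro _ ⟨x, y, rfl⟩; exact hbr x y) hz
    exact hz0 (dotProduct_self_eq_zero.1 this)
  have hcentral : ∀ j, adMat μ (Pi.single j 1) *ᵥ z = 0 :=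
    fun j => (adMat_mulVec (h.1 _) z).trans (hzc _)
  rw [Ric_mulVec_dotProduct]
  simp only [hcentral, dotProduct_zero, Finset.sum_const_zero, mul_zero, zero_add]
  have := sum_dotProduct_self_pos (v := fun j => (adMat μ (Pi.single j 1))ᵀ *ᵥ z) hi
  positivity

end Ricci

-- A copy of `ℝⁿ` on which `μ` is the Lie bracket.
def BracketAlgebra {n : ℕ} (_μ : (Fin n → ℝ) → (Fin n → ℝ) → (Fin n → ℝ)) : Type := Fin n → ℝ

namespace BracketAlgebra

variable {n : ℕ} {μ : (Fin n → ℝ) → (Fin n → ℝ) → (Fin n → ℝ)}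

instance : AddCommGroup (BracketAlgebra μ) := inferInstanceAs (AddCommGroup (Fin n → ℝ))

instance : Module ℝ (BracketAlgebra μ) := inferInstanceAs (Module ℝ (Fin n → ℝ))

instance : IsNoetherian ℝ (BracketAlgebra μ) := inferInstanceAs (IsNoetherian ℝ (Fin n → ℝ))

variable [hμ : Fact (IsSkewBil μ ∧ IsJacobi μ)]

instance : LieRing (BracketAlgebra μ) where
  bracket := μ
  add_lie x y z := (hμ.out.1.2.1 z).map_add x y
  lie_add x y z := (hμ.out.1.1 x).map_add y z
  lie_self x := by
    show μ x x = 0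
    exact funext fun i => CharZero.eq_neg_self_iff.1 (congrFun (hμ.out.1.2.2 x x) i)
  leibniz_lie x y z := by
    obtain ⟨⟨hlin, -, hskew⟩, hjac⟩ := hμ.out
    have jacobi := hjac x y z
    rw [hskew z x, (hlin y).map_neg, hskew z (μ x y)] at jacobi
    show μ x (μ y z) = μ (μ x y) z + μ y (μ x z)
    rw [← sub_eq_zero, ← jacobi]
    abel

instance : LieAlgebra ℝ (BracketAlgebra μ) where
  lie_smul c x y := (hμ.out.1.1 x).map_smul c y

end BracketAlgebra

theorem IsNilBracket.exists_central_mem_span {n : ℕ}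
    {μ : (Fin n → ℝ) → (Fin n → ℝ) → (Fin n → ℝ)} (hμ : IsNilBracket μ)
    (hne : μ ≠ fun _ _ => 0) :
    ∃ z, z ≠ 0 ∧ (∀ x, μ x z = 0) ∧ z ∈ Submodule.span ℝ {w | ∃ x y, μ x y = w} := by
  have : Fact (IsSkewBil μ ∧ IsJacobi μ) := ⟨⟨hμ.1, hμ.2.1⟩⟩
  let L := BracketAlgebra μ
  have : LieRing.IsNilpotent L := LieAlgebra.isNilpotent_iff_forall.2 fun x => by
    have : LieAlgebra.ad ℝ L x = Matrix.toLin' (adMat μ x) :=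
      LinearMap.ext fun y => (adMat_mulVec (hμ.1.1 x) y).symm
    rw [this]
    exact (hμ.2.2 x).map Matrix.toLinAlgEquiv'
  have hnontriv : ¬ LieModule.IsTrivial L L := fun h => hne (funext₂ fun x y => h.trivial x y)
  rw [← LieModule.disjoint_lowerCentralSeries_maxTrivSubmodule_iff ℝ,
    ← LieSubmodule.disjoint_toSubmodule, Submodule.disjoint_def] at hnontriv
  push Not at hnontriv
  obtain ⟨z, hz1, hzc, hz0⟩ := hnontriv
  refine ⟨z, hz0, (LieModule.mem_maxTrivSubmodule ℝ L L z).1 hzc, ?_⟩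
  rw [LieModule.lowerCentralSeries_succ, LieModule.lowerCentralSeries_zero,
    LieSubmodule.lieIdeal_oper_eq_linear_span'] at hz1
  refine Submodule.span_mono ?_ hz1
  rintro _ ⟨x, -, y, -, rfl⟩
  exact ⟨x, y, rfl⟩

/-- the Ricci form of a nonzero nilpotent Lie bracket has both
negative and positive directions. -/
theorem stmt7 {n : ℕ} (μ : (Fin n → ℝ) → (Fin n → ℝ) → (Fin n → ℝ))
    (hμ : IsNilBracket μ) (hne : μ ≠ (fun _ _ => 0)) :
    (∃ x : Fin n → ℝ, ∑ k, ((Ric μ).mulVec x) k * x k < 0) ∧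
    (∃ y : Fin n → ℝ, 0 < ∑ k, ((Ric μ).mulVec y) k * y k) := by
  have hbil : IsBilinear μ := ⟨hμ.1.1, hμ.1.2.1⟩
  obtain ⟨i, j, hij⟩ := hbil.exists_apply_single_ne_zero hne
  obtain ⟨z, hz0, hzc, hz⟩ := hμ.exists_central_mem_span hne
  exact ⟨exists_Ric_mulVec_dotProduct_neg hij, z, Ric_mulVec_dotProduct_pos hbil hz0 hzc hz⟩
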